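/- (Concentration in a well.) Let c be a coefficient, let 0 ≤ α < β < H and c₁ ∈ (c_m, c_M] with c(y) ≥ c₁ for a.e. y ∈ (0,H) \ (α,β), and fix ε > 0. Let (μ_n)_{n≥1} be positive reals and (λ_n)_{n≥1} satisfy c_m μ_n² ≤ λ_n ≤ (c₁ − ε)μ_n² for all n and λ_n → ∞, and for each n let u_n be a normalized Dirichlet solution of the reduced problem with parameters (μ_n, λ_n). Then for every closed interval [a,b] ⊆ [0,H] with [a,b] ∩ [α,β] = ∅ one has lim_{n→∞} ∫_a^b u_n(y)² dy = 0. -/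

import Mathlib

/-!
Multiplying the equation by `u` gives Green's identity `(u v)' = c u'² + (c μ² - λ) u²`.
Off the well `c μ² - λ ≥ ε μ²`, so integrating from the end `0` or `H` where `u` vanishes,
`|u z * v z| ≥ ε μ² ∫_a^b u²` for every `z` in the gap between the layer `[a, b]` and the
well. Averaging over the gap, of length `d`, gives
`d ε μ² ∫_a^b u² ≤ ∫_0^H |u v| ≤ c_M ∫_0^H |u u'|`. The energy identity
`∫ c u'² = ∫ (λ - c μ²) u² ≤ λ` and `2 √λ |u u'| ≤ λ u² + u'²` bound the right side by
`c_M √λ (1 + 1/c_m) / 2`, and `μ² ≥ λ / (c₁ - ε)` turns this into `∫_a^b u² = O(λ^(-1/2))`.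
-/

open MeasureTheory Set Filter Topology

noncomputable section

/-- `u` (with flux `v = c·u'` and weak derivative `g = u'`) is a solution of the reduced
problem `(c u')' + (λ - c μ²) u = 0` on the interval `[a, b]`:
`u` is absolutely continuous with derivative `g ∈ L²`, the flux `v` agrees a.e. with `c·g`,
and `v` is absolutely continuous with derivative `(c μ² - λ)·u`. -/
def IsReducedSolutionOn (a b : ℝ) (c : ℝ → ℝ) (μ lam : ℝ) (u v g : ℝ → ℝ) : Prop :=
  IntervalIntegrable g volume a b ∧
  IntervalIntegrable (fun t => g t ^ 2) volume a b ∧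
  (∀ y ∈ Set.Icc a b, u y = u a + ∫ t in a..y, g t) ∧
  (∀ᵐ y ∂volume.restrict (Set.Ioo a b), v y = c y * g y) ∧
  IntervalIntegrable (fun t => (c t * μ ^ 2 - lam) * u t) volume a b ∧
  (∀ y ∈ Set.Icc a b, v y = v a + ∫ t in a..y, (c t * μ ^ 2 - lam) * u t)

/-- A coefficient on `[0, H]`: measurable and bounded between `cm` and `cM`. -/
def IsCoeff (H cm cM : ℝ) (c : ℝ → ℝ) : Prop :=
  Measurable c ∧ ∀ y ∈ Set.Icc (0 : ℝ) H, cm ≤ c y ∧ c y ≤ cM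

theorem absolutelyContinuousOnInterval_const_add_integral {f : ℝ → ℝ} {a b : ℝ} (k : ℝ)
    (hf : IntervalIntegrable f volume a b) :
    AbsolutelyContinuousOnInterval (fun x => k + ∫ t in a..x, f t) a b :=
  (LipschitzWith.const k).lipschitzOnWith.absolutelyContinuousOnInterval.add
    (hf.absolutelyContinuousOnInterval_intervalIntegral left_mem_uIcc)

theorem integral_deriv_mul_eq_sub_of_primitive {f₁ f₂ : ℝ → ℝ} {a b : ℝ} (k₁ k₂ : ℝ)
    (h₁ : IntervalIntegrable f₁ volume a b) (h₂ : IntervalIntegrable f₂ volume a b) :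
    ∫ x in a..b, (f₁ x * (k₂ + ∫ t in a..x, f₂ t) + (k₁ + ∫ t in a..x, f₁ t) * f₂ x) =
      (k₁ + ∫ t in a..b, f₁ t) * (k₂ + ∫ t in a..b, f₂ t) - k₁ * k₂ := by
  have key := AbsolutelyContinuousOnInterval.integral_deriv_mul_eq_sub
    (absolutelyContinuousOnInterval_const_add_integral k₁ h₁)
    (absolutelyContinuousOnInterval_const_add_integral k₂ h₂)
  simp only [intervalIntegral.integral_same, add_zero] at key
  rw [← key]
  refine intervalIntegral.integral_congr_ae ?_
  filter_upwards [h₁.ae_hasDerivAt_integral, h₂.ae_hasDerivAt_integral] with x hx₁ hx₂ hx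
  have hx' := uIoc_subset_uIcc hx
  rw [((hx₁ hx' a left_mem_uIcc).const_add k₁).deriv,
    ((hx₂ hx' a left_mem_uIcc).const_add k₂).deriv]

theorem eq_add_integral_of_forall_eq_add_integral {F f : ℝ → ℝ} {a b x y : ℝ}
    (hF : ∀ y ∈ Icc a b, F y = F a + ∫ t in a..y, f t) (hf : IntervalIntegrable f volume a b)
    (hx : x ∈ Icc a b) (hy : y ∈ Icc a b) :
    F y = F x + ∫ t in x..y, f t := by
  have hsub : ∀ z ∈ Icc a b, uIcc a z ⊆ uIcc a b := fun z hz =>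
    uIcc_subset_uIcc left_mem_uIcc (Icc_subset_uIcc hz)
  rw [hF y hy, hF x hx, ← intervalIntegral.integral_interval_sub_left
    (hf.mono_set (hsub y hy)) (hf.mono_set (hsub x hx))]
  ring

theorem continuousOn_of_forall_eq_add_integral {F f : ℝ → ℝ} {a b : ℝ} (hab : a ≤ b)
    (hF : ∀ y ∈ Icc a b, F y = F a + ∫ t in a..y, f t) (hf : IntervalIntegrable f volume a b) :
    ContinuousOn F (Icc a b) := by
  have hprim := intervalIntegral.continuousOn_primitive_interval' hf left_mem_uIcc
  rw [uIcc_of_le hab] at hprim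
  exact (continuousOn_const.add hprim).congr hF

theorem sub_mul_le_integral_of_forall_le {f : ℝ → ℝ} {p r m : ℝ} (hpr : p ≤ r)
    (hf : IntervalIntegrable f volume p r) (hm : ∀ z ∈ Icc p r, m ≤ f z) :
    (r - p) * m ≤ ∫ z in p..r, f z := by
  simpa using intervalIntegral.integral_mono_on hpr intervalIntegrable_const hf hm

theorem exists_pos_add_le_or_add_le_of_disjoint_Icc {a b α β : ℝ} (hab : a ≤ b) (hαβ : α ≤ β)
    (h : Disjoint (Icc a b) (Icc α β)) : ∃ d > 0, b + d ≤ α ∨ β + d ≤ a := by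
  rcases lt_or_ge b α with hbα | hαb
  · exact ⟨α - b, by linarith, Or.inl (by linarith)⟩
  rcases lt_or_ge β a with hβa | haβ
  · exact ⟨a - β, by linarith, Or.inr (by linarith)⟩
  exact absurd h (not_disjoint_iff.2 ⟨max a α, ⟨le_max_left _ _, max_le hab hαb⟩,
    ⟨le_max_right _ _, max_le haβ hαβ⟩⟩)

namespace IsReducedSolutionOn

variable {a b x y : ℝ} {c : ℝ → ℝ} {μ lam : ℝ} {u v g : ℝ → ℝ}

theorem continuousOn (h : IsReducedSolutionOn a b c μ lam u v g) (hab : a ≤ b) :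
    ContinuousOn u (Icc a b) :=
  continuousOn_of_forall_eq_add_integral hab h.2.2.1 h.1

theorem continuousOn_flux (h : IsReducedSolutionOn a b c μ lam u v g) (hab : a ≤ b) :
    ContinuousOn v (Icc a b) :=
  continuousOn_of_forall_eq_add_integral hab h.2.2.2.2.2 h.2.2.2.2.1

theorem mono (h : IsReducedSolutionOn a b c μ lam u v g) (hax : a ≤ x) (hxy : x ≤ y)
    (hyb : y ≤ b) : IsReducedSolutionOn x y c μ lam u v g := by
  obtain ⟨hg, hg2, hu, hv, hq, hvq⟩ := h
  have hsub : uIcc x y ⊆ uIcc a b := by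
    rw [uIcc_of_le hxy, uIcc_of_le (hax.trans (hxy.trans hyb))]
    exact Icc_subset_Icc hax hyb
  have hx : x ∈ Icc a b := ⟨hax, hxy.trans hyb⟩
  have hIcc : Icc x y ⊆ Icc a b := Icc_subset_Icc hax hyb
  exact ⟨hg.mono_set hsub, hg2.mono_set hsub,
    fun z hz => eq_add_integral_of_forall_eq_add_integral hu hg hx (hIcc hz),
    ae_restrict_of_ae_restrict_of_subset (Ioo_subset_Ioo hax hyb) hv, hq.mono_set hsub,
    fun z hz => eq_add_integral_of_forall_eq_add_integral hvq hq hx (hIcc hz)⟩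

theorem mul_sub_mul_eq_integral (h : IsReducedSolutionOn a b c μ lam u v g) (hab : a ≤ b) :
    u b * v b - u a * v a =
      ∫ t in a..b, (c t * g t ^ 2 + (c t * μ ^ 2 - lam) * u t ^ 2) := by
  obtain ⟨hg, -, hu, hv, hq, hvq⟩ := h
  have hb : b ∈ Icc a b := right_mem_Icc.2 hab
  rw [hu b hb, hvq b hb, ← integral_deriv_mul_eq_sub_of_primitive _ _ hg hq,
    intervalIntegral.integral_of_le hab, intervalIntegral.integral_of_le hab,
    integral_Ioc_eq_integral_Ioo, integral_Ioc_eq_integral_Ioo]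
  refine setIntegral_congr_ae measurableSet_Ioo ?_
  filter_upwards [(ae_restrict_iff' measurableSet_Ioo).1 hv] with t hvt ht
  have ht' : t ∈ Icc a b := Ioo_subset_Icc_self ht
  rw [← hu t ht', ← hvq t ht', hvt ht]
  ring

end IsReducedSolutionOn

section Dirichlet

variable {H cm cM : ℝ} {c : ℝ → ℝ} {μ lam : ℝ} {u v g : ℝ → ℝ} {α β c₁ ε : ℝ}

theorem IsCoeff.intervalIntegrable_mul (hc : IsCoeff H cm cM c) (hH : 0 ≤ H) {f : ℝ → ℝ}
    (hf : IntervalIntegrable f volume 0 H) :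
    IntervalIntegrable (fun t => c t * f t) volume 0 H := by
  rw [intervalIntegrable_iff_integrableOn_Ioc_of_le hH] at hf ⊢
  refine hf.bdd_mul hc.1.aestronglyMeasurable.restrict (c := max |cm| |cM|) ?_
  filter_upwards [ae_restrict_mem measurableSet_Ioc] with t ht
  have hct := hc.2 t (Ioc_subset_Icc_self ht)
  exact abs_le_max_abs_abs hct.1 hct.2

theorem IsReducedSolutionOn.intervalIntegrable_energy (hc : IsCoeff H cm cM c) (hH : 0 ≤ H)
    (hsol : IsReducedSolutionOn 0 H c μ lam u v g) :
    IntervalIntegrable (fun t => c t * g t ^ 2 + (c t * μ ^ 2 - lam) * u t ^ 2) volume 0 H := by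
  have hqu := hsol.2.2.2.2.1.mul_continuousOn (by rw [uIcc_of_le hH]; exact hsol.continuousOn hH)
  refine (hc.intervalIntegrable_mul hH hsol.2.1).add (hqu.congr fun t _ => ?_)
  ring

theorem IsReducedSolutionOn.intervalIntegrable_sq (hH : 0 ≤ H)
    (hsol : IsReducedSolutionOn 0 H c μ lam u v g) :
    IntervalIntegrable (fun t => u t ^ 2) volume 0 H :=
  ((hsol.continuousOn hH).pow 2).intervalIntegrable_of_Icc hH

theorem IsReducedSolutionOn.integral_energy_eq_zero (hH : 0 ≤ H)
    (hsol : IsReducedSolutionOn 0 H c μ lam u v g) (hu0 : u 0 = 0) (huH : u H = 0) :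
    ∫ t in 0..H, (c t * g t ^ 2 + (c t * μ ^ 2 - lam) * u t ^ 2) = 0 := by
  rw [← hsol.mul_sub_mul_eq_integral hH, hu0, huH]
  ring

theorem IsReducedSolutionOn.mul_integral_sq_deriv_le (hc : IsCoeff H cm cM c) (hcm : 0 ≤ cm)
    (hH : 0 ≤ H) (hsol : IsReducedSolutionOn 0 H c μ lam u v g) (hu0 : u 0 = 0)
    (huH : u H = 0) :
    cm * ∫ t in 0..H, g t ^ 2 ≤ lam * ∫ t in 0..H, u t ^ 2 := by
  have hg2 := hsol.2.1.const_mul cm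
  have hu2 := (hsol.intervalIntegrable_sq hH).const_mul lam
  have key := intervalIntegral.integral_mono_on hH (hg2.sub hu2)
    (hsol.intervalIntegrable_energy hc hH) fun t ht => by
      have hct := hc.2 t ht
      nlinarith [mul_le_mul_of_nonneg_right hct.1 (sq_nonneg (g t)),
        mul_nonneg (mul_nonneg (hcm.trans hct.1) (sq_nonneg μ)) (sq_nonneg (u t))]
  rw [hsol.integral_energy_eq_zero hH hu0 huH, intervalIntegral.integral_sub hg2 hu2,
    intervalIntegral.integral_const_mul, intervalIntegral.integral_const_mul] at key
  linarith

theorem IsReducedSolutionOn.mul_integral_abs_mul_flux_le (hc : IsCoeff H cm cM c)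
    (hcm : 0 ≤ cm) (hH : 0 ≤ H) (hsol : IsReducedSolutionOn 0 H c μ lam u v g) {s : ℝ}
    (hs : 0 ≤ s) :
    2 * s * ∫ t in 0..H, |u t * v t| ≤
      cM * ((s ^ 2 * ∫ t in 0..H, u t ^ 2) + ∫ t in 0..H, g t ^ 2) := by
  have huv : IntervalIntegrable (fun t => |u t * v t|) volume 0 H :=
    ((hsol.continuousOn hH).mul (hsol.continuousOn_flux hH)).abs.intervalIntegrable_of_Icc hH
  have hu2 := (hsol.intervalIntegrable_sq hH).const_mul (s ^ 2)
  have key :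
      ∫ t in 0..H, 2 * s * |u t * v t| ≤ ∫ t in 0..H, cM * (s ^ 2 * u t ^ 2 + g t ^ 2) := by
    refine intervalIntegral.integral_mono_ae_restrict hH (huv.const_mul _)
      ((hu2.add hsol.2.1).const_mul _) ?_
    rw [← Measure.restrict_congr_set Ioo_ae_eq_Icc]
    filter_upwards [hsol.2.2.2.1, ae_restrict_mem measurableSet_Ioo] with t hvt ht
    have hct := hc.2 t (Ioo_subset_Icc_self ht)
    have hc0 : 0 ≤ c t := hcm.trans hct.1
    calc 2 * s * |u t * v t| = c t * (2 * s * |u t| * |g t|) := by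
          rw [hvt, abs_mul, abs_mul, abs_of_nonneg hc0]; ring
      _ ≤ cM * (2 * s * |u t| * |g t|) := mul_le_mul_of_nonneg_right hct.2 (by positivity)
      _ ≤ cM * (s ^ 2 * u t ^ 2 + g t ^ 2) :=
          mul_le_mul_of_nonneg_left
            (by nlinarith [sq_nonneg (s * |u t| - |g t|), sq_abs (u t), sq_abs (g t)])
            (hc0.trans hct.2)
  rwa [intervalIntegral.integral_const_mul, intervalIntegral.integral_const_mul,
    intervalIntegral.integral_add hu2 hsol.2.1, intervalIntegral.integral_const_mul] at key

theorem IsReducedSolutionOn.mul_integral_sq_le_mul_flux_sub (hc : IsCoeff H cm cM c)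
    (hcm : 0 ≤ cm) (hsol : IsReducedSolutionOn 0 H c μ lam u v g)
    (hwell : ∀ᵐ y ∂volume.restrict (Ioo 0 H \ Ioo α β), c₁ ≤ c y)
    (hhigh : lam ≤ (c₁ - ε) * μ ^ 2) {x y : ℝ} (hx : 0 ≤ x) (hxy : x ≤ y) (hy : y ≤ H)
    (hdisj : Disjoint (Ioo x y) (Ioo α β)) :
    ε * μ ^ 2 * ∫ t in x..y, u t ^ 2 ≤ u y * v y - u x * v x := by
  have hsub := hsol.mono hx hxy hy
  have hxyH : uIcc x y ⊆ uIcc 0 H := by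
    rw [uIcc_of_le hxy, uIcc_of_le (hx.trans (hxy.trans hy))]
    exact Icc_subset_Icc hx hy
  rw [hsub.mul_sub_mul_eq_integral hxy, ← intervalIntegral.integral_const_mul]
  refine intervalIntegral.integral_mono_ae_restrict hxy
    ((((hsub.continuousOn hxy).pow 2).intervalIntegrable_of_Icc hxy).const_mul _)
    ((hsol.intervalIntegrable_energy hc (hx.trans (hxy.trans hy))).mono_set hxyH) ?_
  rw [← Measure.restrict_congr_set Ioo_ae_eq_Icc]
  have hwell' : ∀ᵐ t ∂volume.restrict (Ioo x y), c₁ ≤ c t :=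
    ae_restrict_of_ae_restrict_of_subset (show Ioo x y ⊆ Ioo 0 H \ Ioo α β from
      fun t ht => ⟨Ioo_subset_Ioo hx hy ht, hdisj.notMem_of_mem_left ht⟩) hwell
  filter_upwards [hwell', ae_restrict_mem measurableSet_Ioo] with t hct ht
  have hc0 : 0 ≤ c t := hcm.trans (hc.2 t ⟨hx.trans ht.1.le, ht.2.le.trans hy⟩).1
  nlinarith [mul_nonneg hc0 (sq_nonneg (g t)), mul_le_mul_of_nonneg_right hhigh (sq_nonneg (u t)),
    mul_nonneg (mul_nonneg (sub_nonneg.2 hct) (sq_nonneg μ)) (sq_nonneg (u t))]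

theorem IsReducedSolutionOn.mul_integral_sq_le_integral_abs_mul_flux (hc : IsCoeff H cm cM c)
    (hcm : 0 ≤ cm) (hsol : IsReducedSolutionOn 0 H c μ lam u v g) (hu0 : u 0 = 0)
    (huH : u H = 0) (hwell : ∀ᵐ y ∂volume.restrict (Ioo 0 H \ Ioo α β), c₁ ≤ c y)
    (hhigh : lam ≤ (c₁ - ε) * μ ^ 2) (hε : 0 ≤ ε) (hβ : 0 ≤ β) (hα : α ≤ H) {a b d : ℝ}
    (ha : 0 ≤ a) (hab : a ≤ b) (hb : b ≤ H) (hd : 0 ≤ d) (hgap : b + d ≤ α ∨ β + d ≤ a) :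
    d * (ε * μ ^ 2 * ∫ t in a..b, u t ^ 2) ≤ ∫ t in 0..H, |u t * v t| := by
  set m := ε * μ ^ 2 * ∫ t in a..b, u t ^ 2
  have hH : 0 ≤ H := ha.trans (hab.trans hb)
  have hsq : ∀ {x y : ℝ}, 0 ≤ x → x ≤ a → b ≤ y → y ≤ H →
      m ≤ ε * μ ^ 2 * ∫ t in x..y, u t ^ 2 := fun hx hxa hby hy => by
    refine mul_le_mul_of_nonneg_left (intervalIntegral.integral_mono_interval hxa hab hby
      (ae_of_all _ fun t => sq_nonneg (u t)) ((hsol.intervalIntegrable_sq hH).mono_set ?_))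
      (by positivity)
    rw [uIcc_of_le (hxa.trans (hab.trans hby)), uIcc_of_le hH]
    exact Icc_subset_Icc hx hy
  suffices ∃ p, 0 ≤ p ∧ p + d ≤ H ∧ ∀ z ∈ Icc p (p + d), m ≤ |u z * v z| by
    obtain ⟨p, hp, hpd, hm⟩ := this
    have huv : IntervalIntegrable (fun t => |u t * v t|) volume 0 H :=
      ((hsol.continuousOn hH).mul (hsol.continuousOn_flux hH)).abs.intervalIntegrable_of_Icc hH
    calc d * m = (p + d - p) * m := by ring
      _ ≤ ∫ z in p..p + d, |u z * v z| := by
        refine sub_mul_le_integral_of_forall_le (by linarith) (huv.mono_set ?_) hm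
        rw [uIcc_of_le (by linarith), uIcc_of_le hH]
        exact Icc_subset_Icc hp hpd
      _ ≤ ∫ z in 0..H, |u z * v z| :=
        intervalIntegral.integral_mono_interval hp (by linarith) hpd
          (ae_of_all _ fun t => abs_nonneg _) huv
  rcases hgap with hgap | hgap
  · refine ⟨b, ha.trans hab, by linarith, fun z hz => ?_⟩
    have hdisj : Disjoint (Ioo 0 z) (Ioo α β) :=
      disjoint_left.2 fun t ht ht' => by linarith [ht.2, ht'.1, hz.2]
    calc m ≤ ε * μ ^ 2 * ∫ t in 0..z, u t ^ 2 := hsq le_rfl ha hz.1 (by linarith [hz.2])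
      _ ≤ u z * v z - u 0 * v 0 := hsol.mul_integral_sq_le_mul_flux_sub hc hcm hwell hhigh
          le_rfl (by linarith [hz.1, ha.trans hab]) (by linarith [hz.2]) hdisj
      _ ≤ |u z * v z| := by rw [hu0, zero_mul, sub_zero]; exact le_abs_self _
  · refine ⟨a - d, by linarith, by linarith, fun z hz => ?_⟩
    have hdisj : Disjoint (Ioo z H) (Ioo α β) :=
      disjoint_left.2 fun t ht ht' => by linarith [ht.1, ht'.2, hz.1]
    calc m ≤ ε * μ ^ 2 * ∫ t in z..H, u t ^ 2 :=
          hsq (by linarith [hz.1]) (by linarith [hz.2]) hb le_rfl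
      _ ≤ u H * v H - u z * v z := hsol.mul_integral_sq_le_mul_flux_sub hc hcm hwell hhigh
          (by linarith [hz.1]) (by linarith [hz.2]) le_rfl hdisj
      _ ≤ |u z * v z| := by rw [huH, zero_mul, zero_sub]; exact neg_le_abs _

theorem IsReducedSolutionOn.integral_sq_le_div_sqrt (hc : IsCoeff H cm cM c)
    (hcm : 0 < cm) (hsol : IsReducedSolutionOn 0 H c μ lam u v g) (hu0 : u 0 = 0)
    (huH : u H = 0) (hwell : ∀ᵐ y ∂volume.restrict (Ioo 0 H \ Ioo α β), c₁ ≤ c y)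
    (hhigh : lam ≤ (c₁ - ε) * μ ^ 2) (hε : 0 < ε) (hlam : 0 < lam) (hβ : 0 ≤ β) (hα : α ≤ H)
    {a b d : ℝ} (ha : 0 ≤ a) (hab : a ≤ b) (hb : b ≤ H) (hd : 0 < d)
    (hgap : b + d ≤ α ∨ β + d ≤ a) :
    ∫ t in a..b, u t ^ 2 ≤
      (c₁ - ε) * cM * (1 + cm⁻¹) / (2 * d * ε * √lam) * ∫ t in 0..H, u t ^ 2 := by
  have hH : 0 ≤ H := ha.trans (hab.trans hb)
  set X := ∫ t in a..b, u t ^ 2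
  set N := ∫ t in 0..H, u t ^ 2
  have hX : 0 ≤ X := intervalIntegral.integral_nonneg hab fun t _ => sq_nonneg (u t)
  have hconc := hsol.mul_integral_sq_le_integral_abs_mul_flux hc hcm.le hu0 huH hwell hhigh
    hε.le hβ hα ha hab hb hd.le hgap
  have hflux := hsol.mul_integral_abs_mul_flux_le hc hcm.le hH (Real.sqrt_nonneg lam)
  have hdir := hsol.mul_integral_sq_deriv_le hc hcm.le hH hu0 huH
  rw [Real.sq_sqrt hlam.le] at hflux
  have hc₁ε : 0 < c₁ - ε := by nlinarith [sq_nonneg μ]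
  have hcM : 0 ≤ cM := (hcm.le.trans (hc.2 0 ⟨le_rfl, hH⟩).1).trans (hc.2 0 ⟨le_rfl, hH⟩).2
  have key : lam * (2 * d * ε * √lam * X) ≤ lam * ((c₁ - ε) * cM * (1 + cm⁻¹) * N) :=
    calc lam * (2 * d * ε * √lam * X)
        ≤ (c₁ - ε) * μ ^ 2 * (2 * d * ε * √lam * X) :=
          mul_le_mul_of_nonneg_right hhigh (by positivity)
      _ = (c₁ - ε) * (2 * √lam * (d * (ε * μ ^ 2 * X))) := by ring
      _ ≤ (c₁ - ε) * (cM * (lam * N + ∫ t in 0..H, g t ^ 2)) :=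
          mul_le_mul_of_nonneg_left
            ((mul_le_mul_of_nonneg_left hconc (by positivity)).trans hflux) hc₁ε.le
      _ ≤ (c₁ - ε) * (cM * (lam * N + cm⁻¹ * (lam * N))) := by
          gcongr
          exact (le_inv_mul_iff₀ hcm).2 hdir
      _ = lam * ((c₁ - ε) * cM * (1 + cm⁻¹) * N) := by ring
  rw [div_mul_eq_mul_div, le_div_iff₀ (by positivity)]
  linarith [le_of_mul_le_mul_left key hlam]

end Dirichlet

theorem stmt3_general (cm cM H : ℝ) (hcm : 0 < cm)
    (c : ℝ → ℝ) (hc : IsCoeff H cm cM c)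
    (α β c₁ : ℝ) (hα : 0 ≤ α) (hαβ : α < β) (hβ : β < H)
    (hwell : ∀ᵐ y ∂volume.restrict (Set.Ioo 0 H \ Set.Ioo α β), c₁ ≤ c y)
    (ε : ℝ) (hε : 0 < ε)
    (μ lam : ℕ → ℝ)
    (hhigh : ∀ n, lam n ≤ (c₁ - ε) * μ n ^ 2)
    (hto : Tendsto lam atTop atTop)
    (u v g : ℕ → ℝ → ℝ)
    (hsol : ∀ n, IsReducedSolutionOn 0 H c (μ n) (lam n) (u n) (v n) (g n))
    (hu0 : ∀ n, u n 0 = 0) (huH : ∀ n, u n H = 0)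
    (hnorm : ∀ n, (∫ y in (0:ℝ)..H, u n y ^ 2) = 1) :
    ∀ a b : ℝ, 0 ≤ a → a ≤ b → b ≤ H → Disjoint (Set.Icc a b) (Set.Icc α β) →
      Tendsto (fun n => ∫ y in a..b, u n y ^ 2) atTop (𝓝 0) := by
  intro a b ha hab hb hdisj
  obtain ⟨d, hd, hgap⟩ := exists_pos_add_le_or_add_le_of_disjoint_Icc hab hαβ.le hdisj
  set K := (c₁ - ε) * cM * (1 + cm⁻¹)
  have hbound : ∀ n, 0 < lam n → ∫ y in a..b, u n y ^ 2 ≤ K / (2 * d * ε * √(lam n)) := by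
    intro n hn
    have h := (hsol n).integral_sq_le_div_sqrt hc hcm (hu0 n) (huH n) hwell (hhigh n) hε hn
      (hα.trans hαβ.le) (hαβ.trans hβ).le ha hab hb hd hgap
    rwa [hnorm n, mul_one] at h
  refine squeeze_zero'
    (Eventually.of_forall fun n => intervalIntegral.integral_nonneg hab fun y _ => sq_nonneg _)
    ((hto.eventually_gt_atTop 0).mono hbound) ?_
  exact tendsto_const_nhds.div_atTop
    ((Real.tendsto_sqrt_atTop.comp hto).const_mul_atTop (by positivity))

/-- concentration in a well — the mass in any closed layer disjoint
from the well tends to zero along a sequence of guided eigenfunctions. -/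
theorem stmt3 (cm cM H : ℝ) (hcm : 0 < cm) (hcmM : cm < cM) (hH : 0 < H)
    (c : ℝ → ℝ) (hc : IsCoeff H cm cM c)
    (α β c₁ : ℝ) (hα : 0 ≤ α) (hαβ : α < β) (hβ : β < H)
    (hc₁ : cm < c₁) (hc₁' : c₁ ≤ cM)
    (hwell : ∀ᵐ y ∂volume.restrict (Set.Ioo 0 H \ Set.Ioo α β), c₁ ≤ c y)
    (ε : ℝ) (hε : 0 < ε)
    (μ lam : ℕ → ℝ) (hμ : ∀ n, 0 < μ n)
    (hlow : ∀ n, cm * μ n ^ 2 ≤ lam n)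
    (hhigh : ∀ n, lam n ≤ (c₁ - ε) * μ n ^ 2)
    (hto : Tendsto lam atTop atTop)
    (u v g : ℕ → ℝ → ℝ)
    (hsol : ∀ n, IsReducedSolutionOn 0 H c (μ n) (lam n) (u n) (v n) (g n))
    (hu0 : ∀ n, u n 0 = 0) (huH : ∀ n, u n H = 0)
    (hnorm : ∀ n, (∫ y in (0:ℝ)..H, u n y ^ 2) = 1) :
    ∀ a b : ℝ, 0 ≤ a → a ≤ b → b ≤ H → Disjoint (Set.Icc a b) (Set.Icc α β) →
      Tendsto (fun n => ∫ y in a..b, u n y ^ 2) atTop (𝓝 0) :=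
  stmt3_general cm cM H hcm c hc α β c₁ hα hαβ hβ hwell ε hε μ lam hhigh hto u v g hsol hu0 huH
    hnorm
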